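/- arXiv:2406.10153 — 4 statements merged into one kernel-verified Lean document; each statement's English description precedes it below -/
import Mathlib

section
/- Let Re > 0, f : [0,∞) → ℝ, and let U, R : [0,∞) × [0,∞) → ℝ (functions of (y,t)) be such that for each t ≥ 0: U(·,t) is twice continuously differentiable with U(0,t) = 0; ∂U/∂y(y,t) → 0 and y·(1 − U(y,t)) → 0 as y → ∞; R(·,t) is continuously differentiable with R(0,t) = 0 and R(y,t) → 0 as y → ∞; the functions y ↦ 1 − U(y,t), ∂U/∂t(·,t), ∂²U/∂y²(·,t), ∂R/∂y(·,t) and y ↦ y·∂U/∂y(y,t) are integrable on (0,∞); and the averaged momentum equation ∂U/∂t + ∂R/∂y = (1/Re)·∂²U/∂y² + f(t)·y·∂U/∂y holds for all (y,t). Suppose further that δ*(t) := ∫₀^∞ (1 − U(y,t)) dy is differentiable in t with dδ*/dt = −∫₀^∞ ∂U/∂t (y,t) dy (differentiation under the integral sign is valid). Then for all t ≥ 0, d/dt (1 − δ*(t)) = f(t)·δ*(t) − (1/Re)·∂U/∂y(0,t). -/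
/-!
Integrate the momentum equation over `y ∈ (0, ∞)`. The time-derivative term gives `-dδ*/dt`;
the viscous term gives `-(1/Re) ∂U/∂y(0, t)` because `∂U/∂y` decays at infinity; the Reynolds
stress term vanishes because `R` vanishes at both ends; and integrating `y ∂U/∂y` by parts
against `y (U - 1)`, whose boundary values are zero, gives `δ*`.
-/

open MeasureTheory Filter Set Topology

theorem integral_Ioi_deriv_of_tendsto_zero {g : ℝ → ℝ} {a : ℝ}
    (hg : ∀ x ∈ Ici a, DifferentiableAt ℝ g x) (hint : IntegrableOn (deriv g) (Ioi a))
    (hlim : Tendsto g atTop (𝓝 0)) :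
    ∫ x in Ioi a, deriv g x = -g a := by
  rw [integral_Ioi_of_hasDerivAt_of_tendsto' (fun x hx => (hg x hx).hasDerivAt) hint hlim,
    zero_sub]

theorem integral_Ioi_mul_deriv_eq_integral_sub {V : ℝ → ℝ} (c : ℝ) (hV : Differentiable ℝ V)
    (hdecay : Tendsto (fun y => y * (c - V y)) atTop (𝓝 0))
    (hint : IntegrableOn (fun y => c - V y) (Ioi 0))
    (hint' : IntegrableOn (fun y => y * deriv V y) (Ioi 0)) :
    ∫ y in Ioi 0, y * deriv V y = ∫ y in Ioi 0, (c - V y) := by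
  have hderiv : ∀ x ∈ Ici (0 : ℝ),
      HasDerivAt (fun y => y * (V y - c)) (x * deriv V x - (c - V x)) x := fun x _ =>
    ((hasDerivAt_id' x).mul ((hV x).hasDerivAt.sub_const c)).congr_deriv (by ring)
  have hlim : Tendsto (fun y => y * (V y - c)) atTop (𝓝 0) := by
    simpa [mul_sub, mul_comm] using hdecay.neg
  have h := integral_Ioi_of_hasDerivAt_of_tendsto' hderiv (hint'.sub hint) hlim
  rw [integral_sub hint' hint, zero_mul, sub_zero] at h
  exact sub_eq_zero.mp h

theorem displacement_thickness_evolution_general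
    (Re : ℝ)
    (f : ℝ → ℝ) (U R : ℝ → ℝ → ℝ)
    (hU2 : ∀ t ≥ (0:ℝ), ContDiff ℝ 2 (fun y => U y t))
    (hUy_lim : ∀ t ≥ (0:ℝ),
      Tendsto (fun y => deriv (fun y' => U y' t) y) atTop (nhds 0))
    (hU_decay : ∀ t ≥ (0:ℝ),
      Tendsto (fun y => y * (1 - U y t)) atTop (nhds 0))
    (hR1 : ∀ t ≥ (0:ℝ), ContDiff ℝ 1 (fun y => R y t))
    (hR0 : ∀ t ≥ (0:ℝ), R 0 t = 0)
    (hR_lim : ∀ t ≥ (0:ℝ), Tendsto (fun y => R y t) atTop (nhds 0))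
    (hint1 : ∀ t ≥ (0:ℝ), IntegrableOn (fun y => 1 - U y t) (Ioi 0))
    (hint3 : ∀ t ≥ (0:ℝ),
      IntegrableOn (fun y => deriv (deriv (fun y' => U y' t)) y) (Ioi 0))
    (hint4 : ∀ t ≥ (0:ℝ),
      IntegrableOn (fun y => deriv (fun y' => R y' t) y) (Ioi 0))
    (hint5 : ∀ t ≥ (0:ℝ),
      IntegrableOn (fun y => y * deriv (fun y' => U y' t) y) (Ioi 0))
    (hpde : ∀ y ≥ (0:ℝ), ∀ t ≥ (0:ℝ),
      deriv (fun s => U y s) t + deriv (fun y' => R y' t) y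
        = (1/Re) * deriv (deriv (fun y' => U y' t)) y
          + f t * y * deriv (fun y' => U y' t) y)
    (hδderiv : ∀ t ≥ (0:ℝ),
      HasDerivAt (fun s => ∫ y in Ioi (0:ℝ), (1 - U y s))
        (-∫ y in Ioi (0:ℝ), deriv (fun s => U y s) t) t) :
    ∀ t ≥ (0:ℝ),
      deriv (fun s => 1 - ∫ y in Ioi (0:ℝ), (1 - U y s)) t
        = f t * (∫ y in Ioi (0:ℝ), (1 - U y t))
          - (1/Re) * deriv (fun y => U y t) 0 := by
  intro t ht
  have hviscous := (hint3 t ht).const_mul (1 / Re)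
  have hforcing := (hint5 t ht).const_mul (f t)
  have hbulk : IntegrableOn (fun y => (1 / Re) * deriv (deriv (fun y' => U y' t)) y
      + f t * (y * deriv (fun y' => U y' t) y)) (Ioi 0) := hviscous.add hforcing
  have hpde_integrated : ∫ y in Ioi 0, deriv (fun s => U y s) t
      = ∫ y in Ioi 0, ((1 / Re) * deriv (deriv (fun y' => U y' t)) y
          + f t * (y * deriv (fun y' => U y' t) y) - deriv (fun y' => R y' t) y) :=
    setIntegral_congr_fun measurableSet_Ioi fun y hy => by
      linarith [hpde y (le_of_lt hy) t ht, mul_assoc (f t) y (deriv (fun y' => U y' t) y)]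
  rw [((hδderiv t ht).const_sub 1).deriv, neg_neg, hpde_integrated,
    integral_sub hbulk (hint4 t ht), integral_add hviscous hforcing,
    integral_const_mul, integral_const_mul,
    integral_Ioi_deriv_of_tendsto_zero (fun x _ => (hU2 t ht).differentiable_deriv_two x)
      (hint3 t ht) (hUy_lim t ht),
    integral_Ioi_deriv_of_tendsto_zero (fun x _ => (hR1 t ht).differentiable one_ne_zero x)
      (hint4 t ht) (hR_lim t ht),
    hR0 t ht,
    integral_Ioi_mul_deriv_eq_integral_sub 1 ((hU2 t ht).differentiable two_ne_zero)
      (hU_decay t ht) (hint1 t ht) (hint5 t ht)]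
  ring

/-- The displacement thickness evolution equation (equation (5) of the paper):
for the streamwise- and spanwise-averaged momentum equation
`∂U/∂t + ∂R/∂y = (1/Re) ∂²U/∂y² + f(t) y ∂U/∂y` with no-slip and far-field
decay conditions, the displacement thickness `δ*(t) = ∫₀^∞ (1 - U) dy`
satisfies `d/dt (1 - δ*) = f δ* - (1/Re) ∂U/∂y(0,t)`. -/
theorem displacement_thickness_evolution
    (Re : ℝ) (hRe : 0 < Re)
    (f : ℝ → ℝ) (U R : ℝ → ℝ → ℝ)
    (hU2 : ∀ t ≥ (0:ℝ), ContDiff ℝ 2 (fun y => U y t))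
    (hU0 : ∀ t ≥ (0:ℝ), U 0 t = 0)
    (hUy_lim : ∀ t ≥ (0:ℝ),
      Tendsto (fun y => deriv (fun y' => U y' t) y) atTop (nhds 0))
    (hU_decay : ∀ t ≥ (0:ℝ),
      Tendsto (fun y => y * (1 - U y t)) atTop (nhds 0))
    (hR1 : ∀ t ≥ (0:ℝ), ContDiff ℝ 1 (fun y => R y t))
    (hR0 : ∀ t ≥ (0:ℝ), R 0 t = 0)
    (hR_lim : ∀ t ≥ (0:ℝ), Tendsto (fun y => R y t) atTop (nhds 0))
    (hint1 : ∀ t ≥ (0:ℝ), IntegrableOn (fun y => 1 - U y t) (Ioi 0))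
    (hint2 : ∀ t ≥ (0:ℝ),
      IntegrableOn (fun y => deriv (fun s => U y s) t) (Ioi 0))
    (hint3 : ∀ t ≥ (0:ℝ),
      IntegrableOn (fun y => deriv (deriv (fun y' => U y' t)) y) (Ioi 0))
    (hint4 : ∀ t ≥ (0:ℝ),
      IntegrableOn (fun y => deriv (fun y' => R y' t) y) (Ioi 0))
    (hint5 : ∀ t ≥ (0:ℝ),
      IntegrableOn (fun y => y * deriv (fun y' => U y' t) y) (Ioi 0))
    (hpde : ∀ y ≥ (0:ℝ), ∀ t ≥ (0:ℝ),
      deriv (fun s => U y s) t + deriv (fun y' => R y' t) y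
        = (1/Re) * deriv (deriv (fun y' => U y' t)) y
          + f t * y * deriv (fun y' => U y' t) y)
    (hδderiv : ∀ t ≥ (0:ℝ),
      HasDerivAt (fun s => ∫ y in Ioi (0:ℝ), (1 - U y s))
        (-∫ y in Ioi (0:ℝ), deriv (fun s => U y s) t) t) :
    ∀ t ≥ (0:ℝ),
      deriv (fun s => 1 - ∫ y in Ioi (0:ℝ), (1 - U y s)) t
        = f t * (∫ y in Ioi (0:ℝ), (1 - U y t))
          - (1/Re) * deriv (fun y => U y t) 0 :=
  displacement_thickness_evolution_general Re f U R hU2 hUy_lim hU_decay hR1 hR0 hR_lim hint1 hint3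
    hint4 hint5 hpde hδderiv
end

section
/- Let Re > 0, f : [0,∞) → ℝ, and let U, R : [0,∞) × [0,∞) → ℝ (functions of (y,t)) be such that for each t ≥ 0: U(·,t) is twice continuously differentiable and bounded, with U(0,t) = 0 and U(y,t) → 1 as y → ∞; ∂U/∂y(y,t) → 0 and y·(1 − U(y,t)) → 0 as y → ∞; R(·,t) is continuously differentiable with R(0,t) = 0 and R(y,t) → 0 as y → ∞; the functions y ↦ 1 − U, y ↦ U(1−U), ∂U/∂t, (1−2U)·∂U/∂t, (∂U/∂y)², R·∂U/∂y, U·∂²U/∂y², U·∂R/∂y, y·∂U/∂y and y·U·∂U/∂y are integrable on (0,∞); and the averaged momentum equation ∂U/∂t + ∂R/∂y = (1/Re)·∂²U/∂y² + f(t)·y·∂U/∂y holds for all (y,t). Suppose further that θ(t) := ∫₀^∞ U(y,t)(1 − U(y,t)) dy is differentiable in t with dθ/dt = ∫₀^∞ (1 − 2U(y,t))·∂U/∂t(y,t) dy (differentiation under the integral sign is valid). Then for all t ≥ 0, dθ/dt = −f(t)·θ(t) − (1/Re)·∂U/∂y(0,t) + (2/Re)·∫₀^∞ (∂U/∂y)²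 dy − 2·∫₀^∞ R·(∂U/∂y) dy. -/
open MeasureTheory Filter Set Topology

/-!
For fixed `t`, write `u = U(·,t)`. Substituting the momentum equation into
`dθ/dt = ∫ (1 - 2u) ∂U/∂t` leaves four integrals, each an exact derivative or an integration by
parts on the half line whose boundary terms are fixed by the wall conditions `u(0) = R(0) = 0` and
the far-field decay: `∫ (u''/Re - R') = -u'(0)/Re`, `∫ u u'' = -∫ u'²`, `∫ u R' = -∫ R u'`, and
`∫ y (u (1 - u))' = -∫ u (1 - u) = -θ`.
-/

theorem integral_Ioi_mul_deriv_eq_neg {a : ℝ} {u v u' v' : ℝ → ℝ}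
    (hu : ∀ x ∈ Ici a, HasDerivAt u (u' x) x) (hv : ∀ x ∈ Ici a, HasDerivAt v (v' x) x)
    (huv' : IntegrableOn (fun x => u x * v' x) (Ioi a))
    (hu'v : IntegrableOn (fun x => u' x * v x) (Ioi a))
    (ha : u a * v a = 0) (h_infty : Tendsto (fun x => u x * v x) atTop (𝓝 0)) :
    ∫ x in Ioi a, u x * v' x = -∫ x in Ioi a, u' x * v x := by
  have h_zero : Tendsto (u * v) (𝓝[>] a) (𝓝 0) := by
    rw [← ha]
    exact ((hu a self_mem_Ici).continuousAt.mul
      (hv a self_mem_Ici).continuousAt).tendsto.mono_left nhdsWithin_le_nhds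
  rw [integral_Ioi_mul_deriv_eq_deriv_mul (fun x hx => hu x (Ioi_subset_Ici_self hx))
    (fun x hx => hv x (Ioi_subset_Ici_self hx)) huv' hu'v h_zero h_infty]
  ring

section HalfLineProfile

variable {u : ℝ → ℝ}

theorem integral_mul_deriv_deriv_eq_neg_integral_deriv_sq {L : ℝ} (hu : ContDiff ℝ 2 u)
    (hu0 : u 0 = 0) (hu_lim : Tendsto u atTop (𝓝 L))
    (hu'_lim : Tendsto (deriv u) atTop (𝓝 0))
    (hint_sq : IntegrableOn (fun y => deriv u y ^ 2) (Ioi 0))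
    (hint : IntegrableOn (fun y => u y * deriv (deriv u) y) (Ioi 0)) :
    ∫ y in Ioi 0, u y * deriv (deriv u) y = -∫ y in Ioi 0, deriv u y ^ 2 := by
  have hu' : ContDiff ℝ 1 (deriv u) := hu.deriv' (n := 1)
  simp only [sq]
  exact integral_Ioi_mul_deriv_eq_neg
    (fun y _ => (hu.differentiable two_ne_zero y).hasDerivAt)
    (fun y _ => (hu'.differentiable one_ne_zero y).hasDerivAt) hint
    (by simpa only [sq] using hint_sq) (by simp [hu0]) (by simpa using hu_lim.mul hu'_lim)

theorem integral_mul_deriv_eq_neg_integral_deriv_mul {r : ℝ → ℝ} {L : ℝ}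
    (hu : ContDiff ℝ 1 u) (hr : ContDiff ℝ 1 r) (hu0 : u 0 = 0)
    (hu_lim : Tendsto u atTop (𝓝 L)) (hr_lim : Tendsto r atTop (𝓝 0))
    (hint_ur' : IntegrableOn (fun y => u y * deriv r y) (Ioi 0))
    (hint_ru' : IntegrableOn (fun y => r y * deriv u y) (Ioi 0)) :
    ∫ y in Ioi 0, u y * deriv r y = -∫ y in Ioi 0, r y * deriv u y := by
  simp only [mul_comm (r _)] at hint_ru' ⊢
  exact integral_Ioi_mul_deriv_eq_neg
    (fun y _ => (hu.differentiable one_ne_zero y).hasDerivAt)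
    (fun y _ => (hr.differentiable one_ne_zero y).hasDerivAt) hint_ur' hint_ru'
    (by simp [hu0]) (by simpa using hu_lim.mul hr_lim)

-- The integrand is `y · (u (1 - u))'`.
theorem integral_moment_deriv_eq_neg_integral_mul_one_sub (hu : Differentiable ℝ u)
    (hu_lim : Tendsto u atTop (𝓝 1)) (hu_decay : Tendsto (fun y => y * (1 - u y)) atTop (𝓝 0))
    (hint : IntegrableOn (fun y => u y * (1 - u y)) (Ioi 0))
    (hint_m1 : IntegrableOn (fun y => y * deriv u y) (Ioi 0))
    (hint_m2 : IntegrableOn (fun y => y * u y * deriv u y) (Ioi 0)) :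
    ∫ y in Ioi 0, (y * deriv u y - 2 * (y * u y * deriv u y))
      = -∫ y in Ioi 0, u y * (1 - u y) := by
  have hderiv : ∀ y, HasDerivAt (fun y => u y * (1 - u y))
      (deriv u y * (1 - u y) + u y * (0 - deriv u y)) y := fun y =>
    (hu y).hasDerivAt.mul ((hasDerivAt_const y 1).sub (hu y).hasDerivAt)
  have hint_m : IntegrableOn
      (fun y => y * (deriv u y * (1 - u y) + u y * (0 - deriv u y))) (Ioi 0) :=
    (hint_m1.sub (hint_m2.const_mul 2)).congr_fun (fun y _ => by simp only [Pi.sub_apply]; ring)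
      measurableSet_Ioi
  have h_infty : Tendsto (fun y => y * (u y * (1 - u y))) atTop (𝓝 0) := by
    simpa only [mul_zero, mul_left_comm (u _)] using hu_lim.mul hu_decay
  have key := integral_Ioi_mul_deriv_eq_neg (fun y _ => hasDerivAt_id y)
    (fun y _ => hderiv y) hint_m (by simpa using hint) (by simp) h_infty
  simp only [id_eq, one_mul] at key
  rw [← key]
  congr 1 with y
  ring

end HalfLineProfile

-- `w` stands for `∂U/∂t`, `ν` for `1/Re` and `F` for `f(t)`.
theorem integral_one_sub_two_mul_of_momentum_balance {ν F : ℝ} {u r w : ℝ → ℝ}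
    (hu : ContDiff ℝ 2 u) (hr : ContDiff ℝ 1 r) (hu0 : u 0 = 0) (hr0 : r 0 = 0)
    (hu_lim : Tendsto u atTop (𝓝 1)) (hu'_lim : Tendsto (deriv u) atTop (𝓝 0))
    (hu_decay : Tendsto (fun y => y * (1 - u y)) atTop (𝓝 0)) (hr_lim : Tendsto r atTop (𝓝 0))
    (hint_w : IntegrableOn w (Ioi 0))
    (hint_mom : IntegrableOn (fun y => u y * (1 - u y)) (Ioi 0))
    (hint_sq : IntegrableOn (fun y => deriv u y ^ 2) (Ioi 0))
    (hint_ru' : IntegrableOn (fun y => r y * deriv u y) (Ioi 0))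
    (hint_uu'' : IntegrableOn (fun y => u y * deriv (deriv u) y) (Ioi 0))
    (hint_ur' : IntegrableOn (fun y => u y * deriv r y) (Ioi 0))
    (hint_m1 : IntegrableOn (fun y => y * deriv u y) (Ioi 0))
    (hint_m2 : IntegrableOn (fun y => y * u y * deriv u y) (Ioi 0))
    (hbal : ∀ y > 0, w y + deriv r y = ν * deriv (deriv u) y + F * y * deriv u y) :
    ∫ y in Ioi 0, (1 - 2 * u y) * w y
      = -F * (∫ y in Ioi 0, u y * (1 - u y)) - ν * deriv u 0
        + 2 * ν * (∫ y in Ioi 0, deriv u y ^ 2) - 2 * (∫ y in Ioi 0, r y * deriv u y) := by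
  have hu1 : ContDiff ℝ 1 u := hu.of_le one_le_two
  have hu' : ContDiff ℝ 1 (deriv u) := hu.deriv' (n := 1)
  have hflux_eq : ∀ y ∈ Ioi (0 : ℝ),
      w y - F * y * deriv u y = ν * deriv (deriv u) y - deriv r y := fun y hy => by
    linarith [hbal y hy]
  have hint_flux : IntegrableOn (fun y => w y - F * y * deriv u y) (Ioi 0) :=
    (hint_w.sub (hint_m1.const_mul F)).congr_fun (fun y _ => by simp only [Pi.sub_apply]; ring)
      measurableSet_Ioi
  have hflux : ∫ y in Ioi 0, (w y - F * y * deriv u y) = -(ν * deriv u 0) := by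
    rw [setIntegral_congr_fun measurableSet_Ioi hflux_eq,
      integral_Ioi_of_hasDerivAt_of_tendsto' (f := fun y => ν * deriv u y - r y)
        (fun y _ => ((hu'.differentiable one_ne_zero y).hasDerivAt.const_mul ν).sub
          (hr.differentiable one_ne_zero y).hasDerivAt)
        (hint_flux.congr_fun hflux_eq measurableSet_Ioi)
        (by simpa using (hu'_lim.const_mul ν).sub hr_lim), hr0]
    ring
  have hint_m : IntegrableOn (fun y => y * deriv u y - 2 * (y * u y * deriv u y)) (Ioi 0) :=
    hint_m1.sub (hint_m2.const_mul 2)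
  have hsplit : ∀ y ∈ Ioi (0 : ℝ), (1 - 2 * u y) * w y
      = (w y - F * y * deriv u y) - 2 * ν * (u y * deriv (deriv u) y)
        + 2 * (u y * deriv r y) + F * (y * deriv u y - 2 * (y * u y * deriv u y)) :=
    fun y hy => by
      rw [show w y = ν * deriv (deriv u) y + F * y * deriv u y - deriv r y by
        linarith [hbal y hy]]
      ring
  have hint_a : IntegrableOn
      (fun y => (w y - F * y * deriv u y) - 2 * ν * (u y * deriv (deriv u) y)) (Ioi 0) :=
    hint_flux.sub (hint_uu''.const_mul _)
  have hint_b : IntegrableOn (fun y => (w y - F * y * deriv u y)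
      - 2 * ν * (u y * deriv (deriv u) y) + 2 * (u y * deriv r y)) (Ioi 0) :=
    hint_a.add (hint_ur'.const_mul _)
  rw [setIntegral_congr_fun measurableSet_Ioi hsplit,
    integral_add hint_b (hint_m.const_mul _), integral_add hint_a (hint_ur'.const_mul _),
    integral_sub hint_flux (hint_uu''.const_mul _), integral_const_mul, integral_const_mul,
    integral_const_mul, hflux,
    integral_mul_deriv_deriv_eq_neg_integral_deriv_sq hu hu0 hu_lim hu'_lim hint_sq hint_uu'',
    integral_mul_deriv_eq_neg_integral_deriv_mul hu1 hr hu0 hu_lim hr_lim hint_ur' hint_ru',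
    integral_moment_deriv_eq_neg_integral_mul_one_sub (hu.differentiable two_ne_zero) hu_lim
      hu_decay hint_mom hint_m1 hint_m2]
  ring

theorem momentum_thickness_evolution_general
    (Re : ℝ)
    (f : ℝ → ℝ) (U R : ℝ → ℝ → ℝ)
    (hU2 : ∀ t ≥ (0:ℝ), ContDiff ℝ 2 (fun y => U y t))
    (hU0 : ∀ t ≥ (0:ℝ), U 0 t = 0)
    (hU_lim : ∀ t ≥ (0:ℝ), Tendsto (fun y => U y t) atTop (nhds 1))
    (hUy_lim : ∀ t ≥ (0:ℝ),
      Tendsto (fun y => deriv (fun y' => U y' t) y) atTop (nhds 0))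
    (hU_decay : ∀ t ≥ (0:ℝ),
      Tendsto (fun y => y * (1 - U y t)) atTop (nhds 0))
    (hR1 : ∀ t ≥ (0:ℝ), ContDiff ℝ 1 (fun y => R y t))
    (hR0 : ∀ t ≥ (0:ℝ), R 0 t = 0)
    (hR_lim : ∀ t ≥ (0:ℝ), Tendsto (fun y => R y t) atTop (nhds 0))
    (hint2 : ∀ t ≥ (0:ℝ), IntegrableOn (fun y => U y t * (1 - U y t)) (Ioi 0))
    (hint3 : ∀ t ≥ (0:ℝ),
      IntegrableOn (fun y => deriv (fun s => U y s) t) (Ioi 0))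
    (hint5 : ∀ t ≥ (0:ℝ),
      IntegrableOn (fun y => (deriv (fun y' => U y' t) y) ^ 2) (Ioi 0))
    (hint6 : ∀ t ≥ (0:ℝ),
      IntegrableOn (fun y => R y t * deriv (fun y' => U y' t) y) (Ioi 0))
    (hint7 : ∀ t ≥ (0:ℝ),
      IntegrableOn (fun y => U y t * deriv (deriv (fun y' => U y' t)) y) (Ioi 0))
    (hint8 : ∀ t ≥ (0:ℝ),
      IntegrableOn (fun y => U y t * deriv (fun y' => R y' t) y) (Ioi 0))
    (hint9 : ∀ t ≥ (0:ℝ),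
      IntegrableOn (fun y => y * deriv (fun y' => U y' t) y) (Ioi 0))
    (hint10 : ∀ t ≥ (0:ℝ),
      IntegrableOn (fun y => y * U y t * deriv (fun y' => U y' t) y) (Ioi 0))
    (hpde : ∀ y ≥ (0:ℝ), ∀ t ≥ (0:ℝ),
      deriv (fun s => U y s) t + deriv (fun y' => R y' t) y
        = (1/Re) * deriv (deriv (fun y' => U y' t)) y
          + f t * y * deriv (fun y' => U y' t) y)
    (hθderiv : ∀ t ≥ (0:ℝ),
      HasDerivAt (fun s => ∫ y in Ioi (0:ℝ), U y s * (1 - U y s))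
        (∫ y in Ioi (0:ℝ), (1 - 2 * U y t) * deriv (fun s => U y s) t) t) :
    ∀ t ≥ (0:ℝ),
      deriv (fun s => ∫ y in Ioi (0:ℝ), U y s * (1 - U y s)) t
        = -f t * (∫ y in Ioi (0:ℝ), U y t * (1 - U y t))
          - (1/Re) * deriv (fun y => U y t) 0
          + (2/Re) * (∫ y in Ioi (0:ℝ), (deriv (fun y' => U y' t) y) ^ 2)
          - 2 * (∫ y in Ioi (0:ℝ), R y t * deriv (fun y' => U y' t) y) := by
  intro t ht
  rw [(hθderiv t ht).deriv]
  exact (integral_one_sub_two_mul_of_momentum_balance (hU2 t ht) (hR1 t ht) (hU0 t ht) (hR0 t ht)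
    (hU_lim t ht) (hUy_lim t ht) (hU_decay t ht) (hR_lim t ht) (hint3 t ht) (hint2 t ht)
    (hint5 t ht) (hint6 t ht) (hint7 t ht) (hint8 t ht) (hint9 t ht) (hint10 t ht)
    (fun y hy => hpde y hy.le t ht)).trans (by ring)

/-- The momentum thickness evolution equation (equation (8) of the paper):
for the streamwise- and spanwise-averaged momentum equation
`∂U/∂t + ∂R/∂y = (1/Re) ∂²U/∂y² + f(t) y ∂U/∂y` with no-slip and far-field
conditions, the momentum thickness `θ(t) = ∫₀^∞ U (1 - U) dy` satisfies
`dθ/dt = -f θ - (1/Re) ∂U/∂y(0,t) + (2/Re) ∫ (∂U/∂y)² - 2 ∫ R ∂U/∂y`. -/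
theorem momentum_thickness_evolution
    (Re : ℝ) (hRe : 0 < Re)
    (f : ℝ → ℝ) (U R : ℝ → ℝ → ℝ)
    (hU2 : ∀ t ≥ (0:ℝ), ContDiff ℝ 2 (fun y => U y t))
    (hUbdd : ∀ t ≥ (0:ℝ), ∃ M : ℝ, ∀ y : ℝ, |U y t| ≤ M)
    (hU0 : ∀ t ≥ (0:ℝ), U 0 t = 0)
    (hU_lim : ∀ t ≥ (0:ℝ), Tendsto (fun y => U y t) atTop (nhds 1))
    (hUy_lim : ∀ t ≥ (0:ℝ),
      Tendsto (fun y => deriv (fun y' => U y' t) y) atTop (nhds 0))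
    (hU_decay : ∀ t ≥ (0:ℝ),
      Tendsto (fun y => y * (1 - U y t)) atTop (nhds 0))
    (hR1 : ∀ t ≥ (0:ℝ), ContDiff ℝ 1 (fun y => R y t))
    (hR0 : ∀ t ≥ (0:ℝ), R 0 t = 0)
    (hR_lim : ∀ t ≥ (0:ℝ), Tendsto (fun y => R y t) atTop (nhds 0))
    (hint1 : ∀ t ≥ (0:ℝ), IntegrableOn (fun y => 1 - U y t) (Ioi 0))
    (hint2 : ∀ t ≥ (0:ℝ), IntegrableOn (fun y => U y t * (1 - U y t)) (Ioi 0))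
    (hint3 : ∀ t ≥ (0:ℝ),
      IntegrableOn (fun y => deriv (fun s => U y s) t) (Ioi 0))
    (hint4 : ∀ t ≥ (0:ℝ),
      IntegrableOn (fun y => (1 - 2 * U y t) * deriv (fun s => U y s) t) (Ioi 0))
    (hint5 : ∀ t ≥ (0:ℝ),
      IntegrableOn (fun y => (deriv (fun y' => U y' t) y) ^ 2) (Ioi 0))
    (hint6 : ∀ t ≥ (0:ℝ),
      IntegrableOn (fun y => R y t * deriv (fun y' => U y' t) y) (Ioi 0))
    (hint7 : ∀ t ≥ (0:ℝ),
      IntegrableOn (fun y => U y t * deriv (deriv (fun y' => U y' t)) y) (Ioi 0))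
    (hint8 : ∀ t ≥ (0:ℝ),
      IntegrableOn (fun y => U y t * deriv (fun y' => R y' t) y) (Ioi 0))
    (hint9 : ∀ t ≥ (0:ℝ),
      IntegrableOn (fun y => y * deriv (fun y' => U y' t) y) (Ioi 0))
    (hint10 : ∀ t ≥ (0:ℝ),
      IntegrableOn (fun y => y * U y t * deriv (fun y' => U y' t) y) (Ioi 0))
    (hpde : ∀ y ≥ (0:ℝ), ∀ t ≥ (0:ℝ),
      deriv (fun s => U y s) t + deriv (fun y' => R y' t) y
        = (1/Re) * deriv (deriv (fun y' => U y' t)) y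
          + f t * y * deriv (fun y' => U y' t) y)
    (hθderiv : ∀ t ≥ (0:ℝ),
      HasDerivAt (fun s => ∫ y in Ioi (0:ℝ), U y s * (1 - U y s))
        (∫ y in Ioi (0:ℝ), (1 - 2 * U y t) * deriv (fun s => U y s) t) t) :
    ∀ t ≥ (0:ℝ),
      deriv (fun s => ∫ y in Ioi (0:ℝ), U y s * (1 - U y s)) t
        = -f t * (∫ y in Ioi (0:ℝ), U y t * (1 - U y t))
          - (1/Re) * deriv (fun y => U y t) 0
          + (2/Re) * (∫ y in Ioi (0:ℝ), (deriv (fun y' => U y' t) y) ^ 2)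
          - 2 * (∫ y in Ioi (0:ℝ), R y t * deriv (fun y' => U y' t) y) :=
  momentum_thickness_evolution_general Re f U R hU2 hU0 hU_lim hUy_lim hU_decay hR1 hR0 hR_lim hint2
    hint3 hint5 hint6 hint7 hint8 hint9 hint10 hpde hθderiv
end

section
/- Let ψ : [0,∞) → ℝ be differentiable such that ψ², y ↦ y²·ψ'(y)², and y ↦ y·ψ(y)·ψ'(y) are integrable on (0,∞), and y·ψ(y)² → 0 as y → ∞. Let p, q, r : [0,∞) → ℝ be square-integrable functions such that p·ψ and y ↦ y·p(y)·ψ'(y) are integrable. Then 1 − (1/2)·( ∫₀^∞ (p − ψ)² + ∫₀^∞ q² + ∫₀^∞ r² ) + ( ∫₀^∞ p² + ∫₀^∞ q² + ∫₀^∞ r² ) + 2·∫₀^∞ y·p·ψ' dy = 1 + (1/2)·( ∫₀^∞ q² + ∫₀^∞ r² ) + (1/2)·∫₀^∞ p² − (1/2)·∫₀^∞ ψ² + ∫₀^∞ p·(ψ + 2yψ') dy ≥ 1 + (1/2)·( ∫₀^∞ q² + ∫₀^∞ r² ) − 2·∫₀^∞ y²·ψ'² dy ≥ 1 − 2·∫₀^∞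 y²·ψ'² dy. -/
open MeasureTheory Filter Set

/-!
Expanding the square `(p - ψ)²` turns the left-hand side into the middle expression. Integrating
by parts, `∫ y ψ ψ' = -½ ∫ ψ²` (the boundary term `y ψ²` vanishes at both ends), which gives
`∫ (ψ + 2yψ')² = 4 ∫ y² ψ'² - ∫ ψ²`. Young's inequality `p g ≥ -½ p² - ½ g²` with
`g = ψ + 2yψ'` then cancels `½ ∫ p²` and `½ ∫ ψ²`, and the last step drops `∫ q² + ∫ r² ≥ 0`.
-/

section Square

variable {α : Type*} [MeasurableSpace α] {μ : Measure α} {f g : α → ℝ}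

theorem integrable_add_sq (hf : Integrable (fun x => f x ^ 2) μ)
    (hg : Integrable (fun x => g x ^ 2) μ) (hfg : Integrable (fun x => f x * g x) μ) :
    Integrable (fun x => (f x + g x) ^ 2) μ :=
  ((hf.fun_add (hfg.const_mul 2)).fun_add hg).congr (ae_of_all _ fun x => by ring)

theorem integral_add_sq (hf : Integrable (fun x => f x ^ 2) μ)
    (hg : Integrable (fun x => g x ^ 2) μ) (hfg : Integrable (fun x => f x * g x) μ) :
    ∫ x, (f x + g x) ^ 2 ∂μ = ∫ x, f x ^ 2 ∂μ + 2 * ∫ x, f x * g x ∂μ + ∫ x, g x ^ 2 ∂μ := by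
  calc ∫ x, (f x + g x) ^ 2 ∂μ = ∫ x, (f x ^ 2 + 2 * (f x * g x)) + g x ^ 2 ∂μ := by
        congr 1 with x; ring
    _ = _ := by
      rw [integral_add (hf.fun_add (hfg.const_mul 2)) hg, integral_add hf (hfg.const_mul 2),
        integral_const_mul]

theorem integral_sub_sq (hf : Integrable (fun x => f x ^ 2) μ)
    (hg : Integrable (fun x => g x ^ 2) μ) (hfg : Integrable (fun x => f x * g x) μ) :
    ∫ x, (f x - g x) ^ 2 ∂μ = ∫ x, f x ^ 2 ∂μ - 2 * ∫ x, f x * g x ∂μ + ∫ x, g x ^ 2 ∂μ := by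
  have hadd := integral_add_sq (g := fun x => -g x) hf (by simpa using hg) (by simpa using hfg.neg)
  simp only [← sub_eq_add_neg, neg_sq, mul_neg, integral_neg] at hadd
  linarith

theorem neg_half_integral_sq_add_le_integral_mul (hf : Integrable (fun x => f x ^ 2) μ)
    (hg : Integrable (fun x => g x ^ 2) μ) (hfg : Integrable (fun x => f x * g x) μ) :
    -(1 / 2 * ∫ x, f x ^ 2 ∂μ + 1 / 2 * ∫ x, g x ^ 2 ∂μ) ≤ ∫ x, f x * g x ∂μ := by
  have hadd := integral_add_sq hf hg hfg
  have hnonneg : 0 ≤ ∫ x, (f x + g x) ^ 2 ∂μ := integral_nonneg fun x => sq_nonneg _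
  linarith

end Square

section WeightedProfile

variable {ψ ψ' : ℝ → ℝ}

theorem integrableOn_sq_add_two_mul_mul {s : Set ℝ} (hψsq : IntegrableOn (fun y => ψ y ^ 2) s)
    (hψ'sq : IntegrableOn (fun y => y ^ 2 * ψ' y ^ 2) s)
    (hψψ' : IntegrableOn (fun y => y * ψ y * ψ' y) s) :
    IntegrableOn (fun y => (ψ y + 2 * y * ψ' y) ^ 2) s :=
  integrable_add_sq hψsq ((hψ'sq.const_mul 4).congr (ae_of_all _ fun y => by ring))
    ((hψψ'.const_mul 2).congr (ae_of_all _ fun y => by ring))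

theorem integral_Ioi_mul_self_mul_deriv {a : ℝ} (hψa : ContinuousWithinAt ψ (Ici a) a)
    (hψ' : ∀ x ∈ Ioi a, HasDerivAt ψ (ψ' x) x)
    (hψsq : IntegrableOn (fun y => ψ y ^ 2) (Ioi a))
    (hψψ' : IntegrableOn (fun y => y * ψ y * ψ' y) (Ioi a))
    (hlim : Tendsto (fun y => y * ψ y ^ 2) atTop (nhds 0)) :
    ∫ y in Ioi a, y * ψ y * ψ' y = -(a * ψ a ^ 2) / 2 - 1 / 2 * ∫ y in Ioi a, ψ y ^ 2 := by
  have hderiv : ∀ x ∈ Ioi a,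
      HasDerivAt (fun y => y * ψ y ^ 2 / 2) (ψ x ^ 2 / 2 + x * ψ x * ψ' x) x := by
    intro x hx
    exact (((hasDerivAt_id' x).fun_mul ((hψ' x hx).fun_pow 2)).div_const 2).congr_deriv
      (by push_cast; ring)
  have hcont : ContinuousWithinAt (fun y => y * ψ y ^ 2 / 2) (Ici a) a :=
    (continuousWithinAt_id.mul (hψa.pow 2)).div_const 2
  have hparts := integral_Ioi_of_hasDerivAt_of_tendsto hcont hderiv
    ((hψsq.div_const 2).add hψψ') (by simpa using hlim.div_const 2)
  rw [integral_add (hψsq.div_const 2) hψψ', integral_div] at hparts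
  linarith

theorem integral_Ioi_zero_sq_add_two_mul_deriv (hψ0 : ContinuousWithinAt ψ (Ici 0) 0)
    (hψ' : ∀ x ∈ Ioi 0, HasDerivAt ψ (ψ' x) x)
    (hψsq : IntegrableOn (fun y => ψ y ^ 2) (Ioi 0))
    (hψ'sq : IntegrableOn (fun y => y ^ 2 * ψ' y ^ 2) (Ioi 0))
    (hψψ' : IntegrableOn (fun y => y * ψ y * ψ' y) (Ioi 0))
    (hlim : Tendsto (fun y => y * ψ y ^ 2) atTop (nhds 0)) :
    ∫ y in Ioi 0, (ψ y + 2 * y * ψ' y) ^ 2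
      = 4 * (∫ y in Ioi 0, y ^ 2 * ψ' y ^ 2) - ∫ y in Ioi 0, ψ y ^ 2 := by
  have hparts := integral_Ioi_mul_self_mul_deriv hψ0 hψ' hψsq hψψ' hlim
  have hsq : ∀ y, (2 * y * ψ' y) ^ 2 = 4 * (y ^ 2 * ψ' y ^ 2) := fun y => by ring
  have hcross : ∀ y, ψ y * (2 * y * ψ' y) = 2 * (y * ψ y * ψ' y) := fun y => by ring
  rw [integral_add_sq hψsq (by simpa only [hsq] using hψ'sq.const_mul 4)
    (by simpa only [hcross] using hψψ'.const_mul 2)]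
  simp only [hsq, hcross, integral_const_mul] at hparts ⊢
  norm_num at hparts
  linarith

end WeightedProfile

theorem skin_friction_coefficient_bound_chain_general
    (ψ : ℝ → ℝ) (hψdiff : Differentiable ℝ ψ)
    (hψ1 : IntegrableOn (fun y => (ψ y) ^ 2) (Ioi 0))
    (hψ2 : IntegrableOn (fun y => y ^ 2 * (deriv ψ y) ^ 2) (Ioi 0))
    (hψ3 : IntegrableOn (fun y => y * ψ y * deriv ψ y) (Ioi 0))
    (hψlim : Tendsto (fun y => y * (ψ y) ^ 2) atTop (nhds 0))
    (p q r : ℝ → ℝ)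
    (hp : IntegrableOn (fun y => (p y) ^ 2) (Ioi 0))
    (hpψ : IntegrableOn (fun y => p y * ψ y) (Ioi 0))
    (hpψ' : IntegrableOn (fun y => y * p y * deriv ψ y) (Ioi 0)) :
    (1 - (1/2) * ((∫ y in Ioi (0:ℝ), (p y - ψ y) ^ 2)
                  + (∫ y in Ioi (0:ℝ), (q y) ^ 2)
                  + (∫ y in Ioi (0:ℝ), (r y) ^ 2))
       + ((∫ y in Ioi (0:ℝ), (p y) ^ 2)
          + (∫ y in Ioi (0:ℝ), (q y) ^ 2)
          + (∫ y in Ioi (0:ℝ), (r y) ^ 2))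
       + 2 * (∫ y in Ioi (0:ℝ), y * p y * deriv ψ y)
      = 1 + (1/2) * ((∫ y in Ioi (0:ℝ), (q y) ^ 2)
                      + (∫ y in Ioi (0:ℝ), (r y) ^ 2))
          + (1/2) * (∫ y in Ioi (0:ℝ), (p y) ^ 2)
          - (1/2) * (∫ y in Ioi (0:ℝ), (ψ y) ^ 2)
          + (∫ y in Ioi (0:ℝ), p y * (ψ y + 2 * y * deriv ψ y)))
    ∧ (1 + (1/2) * ((∫ y in Ioi (0:ℝ), (q y) ^ 2)
                      + (∫ y in Ioi (0:ℝ), (r y) ^ 2))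
          + (1/2) * (∫ y in Ioi (0:ℝ), (p y) ^ 2)
          - (1/2) * (∫ y in Ioi (0:ℝ), (ψ y) ^ 2)
          + (∫ y in Ioi (0:ℝ), p y * (ψ y + 2 * y * deriv ψ y))
        ≥ 1 + (1/2) * ((∫ y in Ioi (0:ℝ), (q y) ^ 2)
                        + (∫ y in Ioi (0:ℝ), (r y) ^ 2))
            - 2 * (∫ y in Ioi (0:ℝ), y ^ 2 * (deriv ψ y) ^ 2))
    ∧ (1 + (1/2) * ((∫ y in Ioi (0:ℝ), (q y) ^ 2)
                        + (∫ y in Ioi (0:ℝ), (r y) ^ 2))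
            - 2 * (∫ y in Ioi (0:ℝ), y ^ 2 * (deriv ψ y) ^ 2)
        ≥ 1 - 2 * (∫ y in Ioi (0:ℝ), y ^ 2 * (deriv ψ y) ^ 2)) := by
  have hψ0 : ContinuousWithinAt ψ (Ici 0) 0 := hψdiff.continuous.continuousWithinAt
  have hψ' : ∀ x ∈ Ioi (0:ℝ), HasDerivAt ψ (deriv ψ x) x := fun x _ => (hψdiff x).hasDerivAt
  have hg : IntegrableOn (fun y => (ψ y + 2 * y * deriv ψ y) ^ 2) (Ioi 0) :=
    integrableOn_sq_add_two_mul_mul hψ1 hψ2 hψ3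
  have hpg : ∀ y, p y * (ψ y + 2 * y * deriv ψ y) = p y * ψ y + 2 * (y * p y * deriv ψ y) :=
    fun y => by ring
  have hpgint : IntegrableOn (fun y => p y * (ψ y + 2 * y * deriv ψ y)) (Ioi 0) := by
    simpa only [hpg] using hpψ.fun_add (hpψ'.const_mul 2)
  have hpgsplit : ∫ y in Ioi (0:ℝ), p y * (ψ y + 2 * y * deriv ψ y)
      = (∫ y in Ioi (0:ℝ), p y * ψ y) + 2 * ∫ y in Ioi (0:ℝ), y * p y * deriv ψ y := by
    simp only [hpg]
    rw [integral_add hpψ (hpψ'.const_mul 2), integral_const_mul]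
  have hyoung := neg_half_integral_sq_add_le_integral_mul hp hg hpgint
  have hgsq := integral_Ioi_zero_sq_add_two_mul_deriv hψ0 hψ' hψ1 hψ2 hψ3 hψlim
  have hq : 0 ≤ ∫ y in Ioi (0:ℝ), q y ^ 2 := integral_nonneg fun y => sq_nonneg _
  have hr : 0 ≤ ∫ y in Ioi (0:ℝ), r y ^ 2 := integral_nonneg fun y => sq_nonneg _
  refine ⟨?_, by linarith, by linarith⟩
  rw [integral_sub_sq hp hψ1 hpψ, hpgsplit]
  ring

/-- The lower-bound chain (equations (16)–(17) of the paper) on the coefficient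
multiplying the skin friction `C_f(t)` in the proof of Theorem 1, with `p, q, r`
playing the roles of the perturbation velocity components `v_x, v_y, v_z`. -/
theorem skin_friction_coefficient_bound_chain
    (ψ : ℝ → ℝ) (hψdiff : Differentiable ℝ ψ)
    (hψ1 : IntegrableOn (fun y => (ψ y) ^ 2) (Ioi 0))
    (hψ2 : IntegrableOn (fun y => y ^ 2 * (deriv ψ y) ^ 2) (Ioi 0))
    (hψ3 : IntegrableOn (fun y => y * ψ y * deriv ψ y) (Ioi 0))
    (hψlim : Tendsto (fun y => y * (ψ y) ^ 2) atTop (nhds 0))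
    (p q r : ℝ → ℝ)
    (hp : IntegrableOn (fun y => (p y) ^ 2) (Ioi 0))
    (hq : IntegrableOn (fun y => (q y) ^ 2) (Ioi 0))
    (hr : IntegrableOn (fun y => (r y) ^ 2) (Ioi 0))
    (hpψ : IntegrableOn (fun y => p y * ψ y) (Ioi 0))
    (hpψ' : IntegrableOn (fun y => y * p y * deriv ψ y) (Ioi 0)) :
    (1 - (1/2) * ((∫ y in Ioi (0:ℝ), (p y - ψ y) ^ 2)
                  + (∫ y in Ioi (0:ℝ), (q y) ^ 2)
                  + (∫ y in Ioi (0:ℝ), (r y) ^ 2))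
       + ((∫ y in Ioi (0:ℝ), (p y) ^ 2)
          + (∫ y in Ioi (0:ℝ), (q y) ^ 2)
          + (∫ y in Ioi (0:ℝ), (r y) ^ 2))
       + 2 * (∫ y in Ioi (0:ℝ), y * p y * deriv ψ y)
      = 1 + (1/2) * ((∫ y in Ioi (0:ℝ), (q y) ^ 2)
                      + (∫ y in Ioi (0:ℝ), (r y) ^ 2))
          + (1/2) * (∫ y in Ioi (0:ℝ), (p y) ^ 2)
          - (1/2) * (∫ y in Ioi (0:ℝ), (ψ y) ^ 2)
          + (∫ y in Ioi (0:ℝ), p y * (ψ y + 2 * y * deriv ψ y)))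
    ∧ (1 + (1/2) * ((∫ y in Ioi (0:ℝ), (q y) ^ 2)
                      + (∫ y in Ioi (0:ℝ), (r y) ^ 2))
          + (1/2) * (∫ y in Ioi (0:ℝ), (p y) ^ 2)
          - (1/2) * (∫ y in Ioi (0:ℝ), (ψ y) ^ 2)
          + (∫ y in Ioi (0:ℝ), p y * (ψ y + 2 * y * deriv ψ y))
        ≥ 1 + (1/2) * ((∫ y in Ioi (0:ℝ), (q y) ^ 2)
                        + (∫ y in Ioi (0:ℝ), (r y) ^ 2))
            - 2 * (∫ y in Ioi (0:ℝ), y ^ 2 * (deriv ψ y) ^ 2))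
    ∧ (1 + (1/2) * ((∫ y in Ioi (0:ℝ), (q y) ^ 2)
                        + (∫ y in Ioi (0:ℝ), (r y) ^ 2))
            - 2 * (∫ y in Ioi (0:ℝ), y ^ 2 * (deriv ψ y) ^ 2)
        ≥ 1 - 2 * (∫ y in Ioi (0:ℝ), y ^ 2 * (deriv ψ y) ^ 2)) :=
  skin_friction_coefficient_bound_chain_general ψ hψdiff hψ1 hψ2 hψ3 hψlim p q r hp hpψ hpψ'
end

section
/- Let a > 0 and ψ(y) = e^{−ay} for y ≥ 0. Let g, h : [0,∞) → ℝ be differentiable with g(0) = h(0) = 0 and square-integrable derivatives g', h' on (0,∞), such that g(y) = ∫₀^y g'(s) ds and h(y) = ∫₀^y h'(s) ds for all y ≥ 0. Then (1/a)·( ∫₀^∞ g'(y)² dy + ∫₀^∞ h'(y)² dy ) − 2·∫₀^∞ g(y)·h(y)·ψ'(y) dy ≥ 0. -/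
/-! By Cauchy–Schwarz on `[0, y]`, `g y ^ 2 ≤ y ‖g'‖²` and `h y ^ 2 ≤ y ‖h'‖²`, so
`|∫ g h ψ'| ≤ (∫ y |ψ'|) ‖g'‖ ‖h'‖ = ‖g'‖ ‖h'‖ / a`; AM–GM bounds `2 ‖g'‖ ‖h'‖` by
`‖g'‖² + ‖h'‖²`. -/

open MeasureTheory Set

theorem sq_integral_le_measureReal_univ_mul_integral_sq {α : Type*} [MeasurableSpace α]
    {μ : Measure α} [IsFiniteMeasure μ] {f : α → ℝ} (hf : MemLp f 2 μ) :
    (∫ x, f x ∂μ) ^ 2 ≤ μ.real univ * ∫ x, f x ^ 2 ∂μ := by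
  set m := μ.real univ
  set J := ∫ x, f x ∂μ
  rcases measureReal_nonneg.eq_or_lt with hm | hm
  · have hμ : μ = 0 := Measure.measure_univ_eq_zero.1 <|
      (measureReal_eq_zero_iff (measure_ne_top μ univ)).1 hm.symm
    simp [J, m, hμ]
  have hf1 : Integrable f μ := hf.integrable one_le_two
  have hf2 : Integrable (fun x => f x ^ 2) μ := (memLp_two_iff_integrable_sq hf.1).1 hf
  -- `∫ (m f - J)² ≥ 0` is the discriminant condition of Cauchy–Schwarz against `1`.
  have hexpand : ∫ x, (m * f x - J) ^ 2 ∂μ = m * (m * ∫ x, f x ^ 2 ∂μ - J ^ 2) := by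
    have hsq : ∀ x, (m * f x - J) ^ 2 = m ^ 2 * f x ^ 2 - 2 * m * J * f x + J ^ 2 :=
      fun x => by ring
    simp_rw [hsq]
    rw [integral_add (f := fun x => m ^ 2 * f x ^ 2 - 2 * m * J * f x)
        ((hf2.const_mul _).sub (hf1.const_mul _)) (integrable_const _),
      integral_sub (hf2.const_mul _) (hf1.const_mul _), integral_const_mul, integral_const_mul,
      integral_const, smul_eq_mul]
    ring
  have hnonneg : 0 ≤ m * (m * ∫ x, f x ^ 2 ∂μ - J ^ 2) :=
    hexpand ▸ integral_nonneg fun x => sq_nonneg _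
  nlinarith [(mul_nonneg_iff_of_pos_left hm).1 hnonneg]

theorem sq_intervalIntegral_le_mul_setIntegral_sq {f : ℝ → ℝ} {c y : ℝ} (hcy : c ≤ y)
    (hf : MemLp f 2 (volume.restrict (Ioi c))) :
    (∫ s in c..y, f s) ^ 2 ≤ (y - c) * ∫ s in Ioi c, f s ^ 2 := by
  have : IsFiniteMeasure (volume.restrict (Ioc c y)) :=
    isFiniteMeasure_restrict.2 measure_Ioc_lt_top.ne
  have hIoc : MemLp f 2 (volume.restrict (Ioc c y)) :=
    hf.mono_measure (Measure.restrict_mono Ioc_subset_Ioi_self le_rfl)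
  have hf2 : IntegrableOn (fun s => f s ^ 2) (Ioi c) := (memLp_two_iff_integrable_sq hf.1).1 hf
  calc (∫ s in c..y, f s) ^ 2
      ≤ (y - c) * ∫ s in Ioc c y, f s ^ 2 := by
        rw [intervalIntegral.integral_of_le hcy, ← Real.volume_real_Ioc_of_le hcy,
          ← measureReal_restrict_apply_univ]
        exact sq_integral_le_measureReal_univ_mul_integral_sq hIoc
    _ ≤ (y - c) * ∫ s in Ioi c, f s ^ 2 := by
        gcongr
        · exact ae_of_all _ fun s => sq_nonneg _
        · exact Ioc_subset_Ioi_self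

theorem abs_le_sqrt_mul_sqrt_setIntegral_sq {g g' : ℝ → ℝ}
    (hg' : MemLp g' 2 (volume.restrict (Ioi 0))) (hg : ∀ y ≥ 0, g y = ∫ s in 0..y, g' s)
    {y : ℝ} (hy : 0 ≤ y) : |g y| ≤ √y * √(∫ s in Ioi 0, g' s ^ 2) := by
  rw [← Real.sqrt_mul hy, hg y hy]
  exact Real.abs_le_sqrt (by simpa using sq_intervalIntegral_le_mul_setIntegral_sq hy hg')

theorem abs_setIntegral_mul_mul_le {g g' h h' w : ℝ → ℝ}
    (hg' : MemLp g' 2 (volume.restrict (Ioi 0))) (hh' : MemLp h' 2 (volume.restrict (Ioi 0)))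
    (hg : ∀ y ≥ 0, g y = ∫ s in 0..y, g' s) (hh : ∀ y ≥ 0, h y = ∫ s in 0..y, h' s)
    (hw : IntegrableOn (fun y => y * |w y|) (Ioi 0)) :
    |∫ y in Ioi 0, g y * h y * w y| ≤
      (∫ y in Ioi 0, y * |w y|) * (√(∫ y in Ioi 0, g' y ^ 2) * √(∫ y in Ioi 0, h' y ^ 2)) := by
  set C := √(∫ y in Ioi 0, g' y ^ 2) * √(∫ y in Ioi 0, h' y ^ 2)
  have hbound : ∀ y ∈ Ioi (0 : ℝ), ‖g y * h y * w y‖ ≤ y * |w y| * C := by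
    intro y (hy : 0 < y)
    have hgy := abs_le_sqrt_mul_sqrt_setIntegral_sq hg' hg hy.le
    have hhy := abs_le_sqrt_mul_sqrt_setIntegral_sq hh' hh hy.le
    calc ‖g y * h y * w y‖ = |g y| * |h y| * |w y| := by
          rw [Real.norm_eq_abs, abs_mul, abs_mul]
      _ ≤ (√y * √(∫ s in Ioi 0, g' s ^ 2)) * (√y * √(∫ s in Ioi 0, h' s ^ 2)) * |w y| := by
          gcongr
      _ = y * |w y| * C := by
          rw [show √y * _ * (√y * _) = √y * √y * C by ring, Real.mul_self_sqrt hy.le]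
          ring
  rw [← integral_mul_const, ← Real.norm_eq_abs]
  exact norm_integral_le_of_norm_le (hw.mul_const C)
    ((ae_restrict_iff' measurableSet_Ioi).2 (ae_of_all _ hbound))

theorem deriv_exp_neg_mul (a y : ℝ) :
    deriv (fun y' => Real.exp (-a * y')) y = -a * Real.exp (-a * y) := by
  simpa [mul_comm] using (((hasDerivAt_id y).const_mul (-a)).exp).deriv

theorem mul_abs_deriv_exp_neg_mul {a : ℝ} (ha : 0 < a) (y : ℝ) :
    y * |deriv (fun y' => Real.exp (-a * y')) y| = a * (y * Real.exp (-(a * y))) := by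
  rw [deriv_exp_neg_mul, abs_mul, abs_neg, abs_of_pos ha, abs_of_pos (Real.exp_pos _), neg_mul]
  ring

theorem integrableOn_mul_abs_deriv_exp_neg_mul {a : ℝ} (ha : 0 < a) :
    IntegrableOn (fun y => y * |deriv (fun y' => Real.exp (-a * y')) y|) (Ioi 0) := by
  simp_rw [mul_abs_deriv_exp_neg_mul ha]
  have h : IntegrableOn (fun y => y * Real.exp (-(a * y))) (Ioi 0) := by
    simpa [Real.rpow_one, neg_mul] using
      integrableOn_rpow_mul_exp_neg_mul_rpow (s := 1) (p := 1) (by norm_num) one_pos ha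
  exact h.const_mul a

theorem setIntegral_mul_abs_deriv_exp_neg_mul {a : ℝ} (ha : 0 < a) :
    ∫ y in Ioi 0, y * |deriv (fun y' => Real.exp (-a * y')) y| = 1 / a := by
  have h := Real.integral_rpow_mul_exp_neg_mul_Ioi two_pos ha
  norm_num [Real.rpow_one, Real.Gamma_two] at h
  simp_rw [mul_abs_deriv_exp_neg_mul ha]
  rw [integral_const_mul, h]
  field_simp

theorem spectral_constraint_exponential_general
    (a : ℝ) (ha : 0 < a)
    (g h : ℝ → ℝ)
    (hg' : IntegrableOn (fun y => (deriv g y) ^ 2) (Ioi 0))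
    (hh' : IntegrableOn (fun y => (deriv h y) ^ 2) (Ioi 0))
    (hgftc : ∀ y ≥ (0:ℝ), g y = ∫ s in (0:ℝ)..y, deriv g s)
    (hhftc : ∀ y ≥ (0:ℝ), h y = ∫ s in (0:ℝ)..y, deriv h s) :
    (1/a) * ((∫ y in Ioi (0:ℝ), (deriv g y) ^ 2)
              + (∫ y in Ioi (0:ℝ), (deriv h y) ^ 2))
      - 2 * (∫ y in Ioi (0:ℝ),
          g y * h y * deriv (fun y' => Real.exp (-a * y')) y) ≥ 0 := by
  set A := ∫ y in Ioi (0:ℝ), (deriv g y) ^ 2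
  set B := ∫ y in Ioi (0:ℝ), (deriv h y) ^ 2
  have hg2 : MemLp (deriv g) 2 (volume.restrict (Ioi 0)) :=
    (memLp_two_iff_integrable_sq (measurable_deriv g).aestronglyMeasurable).2 hg'
  have hh2 : MemLp (deriv h) 2 (volume.restrict (Ioi 0)) :=
    (memLp_two_iff_integrable_sq (measurable_deriv h).aestronglyMeasurable).2 hh'
  have hweighted := abs_setIntegral_mul_mul_le hg2 hh2 hgftc hhftc
    (integrableOn_mul_abs_deriv_exp_neg_mul ha)
  rw [setIntegral_mul_abs_deriv_exp_neg_mul ha] at hweighted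
  have hamgm : 2 * (√A * √B) ≤ A + B := by
    have hsq := two_mul_le_add_sq √A √B
    rwa [Real.sq_sqrt (setIntegral_nonneg measurableSet_Ioi fun _ _ => sq_nonneg _),
      Real.sq_sqrt (setIntegral_nonneg measurableSet_Ioi fun _ _ => sq_nonneg _), mul_assoc] at hsq
  set I := ∫ y in Ioi (0:ℝ), g y * h y * deriv (fun y' => Real.exp (-a * y')) y
  rw [ge_iff_le, sub_nonneg]
  calc 2 * I ≤ 2 * (1 / a * (√A * √B)) := by gcongr; exact (le_abs_self I).trans hweighted
    _ = 1 / a * (2 * (√A * √B)) := by ring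
    _ ≤ 1 / a * (A + B) := by gcongr

/-- A one-dimensional analogue of the spectral constraint `Q_ψ(v) ≥ 0`
verified in the proof of Theorem 1 for the exponential background profile
`ψ(y) = e^{-a y}`. -/
theorem spectral_constraint_exponential
    (a : ℝ) (ha : 0 < a)
    (g h : ℝ → ℝ) (hgdiff : Differentiable ℝ g) (hhdiff : Differentiable ℝ h)
    (hg0 : g 0 = 0) (hh0 : h 0 = 0)
    (hg' : IntegrableOn (fun y => (deriv g y) ^ 2) (Ioi 0))
    (hh' : IntegrableOn (fun y => (deriv h y) ^ 2) (Ioi 0))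
    (hgftc : ∀ y ≥ (0:ℝ), g y = ∫ s in (0:ℝ)..y, deriv g s)
    (hhftc : ∀ y ≥ (0:ℝ), h y = ∫ s in (0:ℝ)..y, deriv h s) :
    (1/a) * ((∫ y in Ioi (0:ℝ), (deriv g y) ^ 2)
              + (∫ y in Ioi (0:ℝ), (deriv h y) ^ 2))
      - 2 * (∫ y in Ioi (0:ℝ),
          g y * h y * deriv (fun y' => Real.exp (-a * y')) y) ≥ 0 :=
  spectral_constraint_exponential_general a ha g h hg' hh' hgftc hhftc
end
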